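/- For a symmetric base density f₀ about 0 on [-π,π), the p-th cosine moment of the extended sine-skewed density f(θ) = 2 f₀(θ) G_m(λ sin θ) equals the p-th cosine moment of f₀: ∫_{-π}^{π} cos(pθ) · 2 f₀(θ) G_m(λ sin θ) dθ = ∫_{-π}^{π} cos(pθ) f₀(θ) dθ for every integer p. -/

import Mathlib

open Real MeasureTheory intervalIntegral

/-- Normalizing constant `C_m = Γ(2(m+1)) / (2^{2m+1} Γ(m+1)^2)`. -/
noncomputable def Cm (m : ℕ) : ℝ :=
  Real.Gamma (2 * (m + 1)) / (2 ^ (2 * m + 1) * Real.Gamma (m + 1) ^ 2)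

/-- The density `g_m(x) = C_m (1 - x^2)^m`. -/
noncomputable def gm (m : ℕ) (x : ℝ) : ℝ := Cm m * (1 - x ^ 2) ^ m

/-- The distribution function `G_m(x) = ∫_{-1}^x g_m`. -/
noncomputable def Gm (m : ℕ) (x : ℝ) : ℝ := ∫ t in (-1 : ℝ)..x, gm m t

/-!
Reflecting `θ ↦ -θ` fixes `cos (p θ) f₀ θ` and turns `G_m (λ sin θ)` into `G_m (-λ sin θ)`,
which equals `1 - G_m (λ sin θ)` because `g_m` is an even probability density on `[-1, 1]`.
Averaging the moment with its reflection therefore replaces `2 G_m (λ sin θ)` by `1`.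
-/

lemma hasDerivAt_mul_one_sub_sq_pow_succ (m : ℕ) (x : ℝ) :
    HasDerivAt (fun x : ℝ => x * (1 - x ^ 2) ^ (m + 1))
      ((2 * m + 3) * (1 - x ^ 2) ^ (m + 1) - 2 * (m + 1) * (1 - x ^ 2) ^ m) x := by
  refine ((hasDerivAt_id' x).fun_mul
    (((hasDerivAt_pow 2 x).const_sub 1).fun_pow (m + 1))).congr_deriv ?_
  push_cast [Nat.add_sub_cancel]
  ring

lemma integral_one_sub_sq_pow_succ (m : ℕ) :
    (2 * m + 3 : ℝ) * ∫ x in (-1 : ℝ)..1, (1 - x ^ 2) ^ (m + 1)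
      = 2 * (m + 1) * ∫ x in (-1 : ℝ)..1, (1 - x ^ 2) ^ m := by
  have hint : ∀ k : ℕ, IntervalIntegrable (fun x : ℝ => (1 - x ^ 2) ^ k) volume (-1) 1 :=
    fun k => (by fun_prop : Continuous fun x : ℝ => (1 - x ^ 2) ^ k).intervalIntegrable _ _
  have hFTC := integral_eq_sub_of_hasDerivAt (fun x _ => hasDerivAt_mul_one_sub_sq_pow_succ m x)
    (((hint (m + 1)).const_mul _).sub ((hint m).const_mul _))
  rw [integral_sub ((hint (m + 1)).const_mul _) ((hint m).const_mul _),
    intervalIntegral.integral_const_mul, intervalIntegral.integral_const_mul] at hFTC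
  norm_num at hFTC
  linarith

theorem integral_one_sub_sq_pow (m : ℕ) :
    ∫ x in (-1 : ℝ)..1, (1 - x ^ 2) ^ m
      = 2 ^ (2 * m + 1) * (m.factorial : ℝ) ^ 2 / (2 * m + 1).factorial := by
  induction m with
  | zero => norm_num
  | succ n ih =>
    have hrec := integral_one_sub_sq_pow_succ n
    rw [ih] at hrec
    have hfact : ((2 * (n + 1) + 1).factorial : ℝ)
        = (2 * n + 3) * ((2 * n + 2) * (2 * n + 1).factorial) := by
      rw [show 2 * (n + 1) + 1 = 2 * n + 1 + 1 + 1 by ring, Nat.factorial_succ,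
        Nat.factorial_succ]
      push_cast
      ring
    rw [Nat.factorial_succ, hfact]
    field_simp at hrec ⊢
    push_cast
    linear_combination (2 * (n : ℝ) + 2) * hrec

lemma Cm_eq (m : ℕ) :
    Cm m = (2 * m + 1).factorial / (2 ^ (2 * m + 1) * (m.factorial : ℝ) ^ 2) := by
  rw [Cm, ← Real.Gamma_nat_eq_factorial, ← Real.Gamma_nat_eq_factorial]
  push_cast
  ring_nf

theorem Gm_one (m : ℕ) : Gm m 1 = 1 := by
  simp only [Gm, gm]
  rw [intervalIntegral.integral_const_mul, integral_one_sub_sq_pow, Cm_eq]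
  field_simp

lemma continuous_gm (m : ℕ) : Continuous (gm m) := by
  unfold gm
  fun_prop

theorem integral_add_integral_neg_upper_of_even {g : ℝ → ℝ} (hg : Continuous g)
    (hg_even : ∀ t, g (-t) = g t) (a x : ℝ) :
    (∫ t in (-a)..x, g t) + ∫ t in (-a)..(-x), g t = ∫ t in (-a)..a, g t := by
  have hreflect : ∫ t in (-a)..(-x), g t = ∫ t in x..a, g t := by
    simpa [hg_even] using integral_comp_neg (a := -a) (b := -x) g
  rw [hreflect, integral_add_adjacent_intervals (hg.intervalIntegrable _ _)
    (hg.intervalIntegrable _ _)]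

theorem Gm_add_Gm_neg (m : ℕ) (x : ℝ) : Gm m x + Gm m (-x) = 1 := by
  rw [← Gm_one m]
  exact integral_add_integral_neg_upper_of_even (continuous_gm m) (fun t => by simp [gm]) 1 x

@[fun_prop]
theorem continuous_Gm (m : ℕ) : Continuous (Gm m) :=
  continuous_primitive (fun a b => (continuous_gm m).intervalIntegrable a b) (-1)

theorem integral_two_mul_mul_eq_integral_of_even {φ w : ℝ → ℝ} {a : ℝ}
    (hφ : ∀ x, φ (-x) = φ x) (hw : ∀ x, w x + w (-x) = 1)
    (hint : IntervalIntegrable (fun x => φ x * w x) volume (-a) a) :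
    ∫ x in (-a)..a, 2 * φ x * w x = ∫ x in (-a)..a, φ x := by
  have hint_neg : IntervalIntegrable (fun x => φ x * w (-x)) volume (-a) a := by
    simpa [hφ] using ((IntervalIntegrable.iff_comp_neg).mp hint).symm
  have hreflect : ∫ x in (-a)..a, φ x * w (-x) = ∫ x in (-a)..a, φ x * w x := by
    simpa [hφ] using integral_comp_neg (a := -a) (b := a) (fun x => φ x * w x)
  calc ∫ x in (-a)..a, 2 * φ x * w x
      = (∫ x in (-a)..a, φ x * w x) + ∫ x in (-a)..a, φ x * w (-x) := by
        rw [hreflect, ← two_mul, ← intervalIntegral.integral_const_mul]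
        simp only [mul_assoc]
    _ = ∫ x in (-a)..a, φ x * (w x + w (-x)) := by
        rw [← integral_add hint hint_neg]
        simp only [mul_add]
    _ = ∫ x in (-a)..a, φ x := by simp only [hw, mul_one]

theorem ess_cosine_moment_general (m : ℕ) (f₀ : ℝ → ℝ) (lam : ℝ) (p : ℤ)
    (hsym : ∀ θ, f₀ (-θ) = f₀ θ)
    (hint : IntervalIntegrable f₀ MeasureTheory.volume (-π) π) :
    (∫ θ in (-π)..π, Real.cos (p * θ) * (2 * f₀ θ * Gm m (lam * Real.sin θ)))
      = ∫ θ in (-π)..π, Real.cos (p * θ) * f₀ θ := by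
  have hskew_int : IntervalIntegrable
      (fun θ => Real.cos (p * θ) * f₀ θ * Gm m (lam * Real.sin θ)) volume (-π) π :=
    (hint.continuousOn_mul (by fun_prop)).mul_continuousOn (by fun_prop)
  calc _ = ∫ θ in (-π)..π, 2 * (Real.cos (p * θ) * f₀ θ) * Gm m (lam * Real.sin θ) := by
        congr 1
        ext θ
        ring
    _ = _ := integral_two_mul_mul_eq_integral_of_even (fun θ => by simp [hsym])
        (fun θ => by simpa [Real.sin_neg] using Gm_add_Gm_neg m (lam * Real.sin θ)) hskew_int

/-- The `p`-th cosine moment of the ESS density equals that of the base density. -/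
theorem ess_cosine_moment (m : ℕ) (f₀ : ℝ → ℝ) (lam : ℝ) (p : ℤ)
    (hlam : lam ∈ Set.Icc (-1 : ℝ) 1)
    (hper : Function.Periodic f₀ (2 * π))
    (hsym : ∀ θ, f₀ (-θ) = f₀ θ)
    (hpos : ∀ θ, 0 ≤ f₀ θ)
    (hmeas : Measurable f₀)
    (hint : IntervalIntegrable f₀ MeasureTheory.volume (-π) π)
    (hdens : ∫ θ in (-π)..π, f₀ θ = 1) :
    (∫ θ in (-π)..π, Real.cos (p * θ) * (2 * f₀ θ * Gm m (lam * Real.sin θ)))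
      = ∫ θ in (-π)..π, Real.cos (p * θ) * f₀ θ :=
  ess_cosine_moment_general m f₀ lam p hsym hint
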